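/- arXiv:1112.3845 — 2 statements merged into one kernel-verified Lean document; each statement's English description precedes it below -/
import Mathlib

section
/- Let $f : \mathbb{R}^n \to [0,\infty)$ be a non-negative convex function with $f(0) = 0$ that is radially symmetric in the last $k$ variables, i.e., $f(x,y) = \tilde f(x,|y|)$ for some $\tilde f : \mathbb{R}^{n-k+1} \to [0,\infty)$. Then there exist sequences $\{a_j\} \subset \mathbb{R}^{n-k}$, $\{b_j\}, \{c_j\} \subset \mathbb{R}$ such that for every $\xi = (\xi_x, \xi_y) \in \mathbb{R}^{n-k}\times\mathbb{R}^k$, $f(\xi) = \sup_{j \in \mathbb{N}} (a_j \cdot \xi_x + b_j |\xi_y| + c_j)^+$, and moreover for each $j$ the function $\xi \mapsto (a_j \cdot \xi_x + b_j |\xi_y| + c_j)^+$ is convex. -/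
/-
A finite convex function on a finite-dimensional space has an affine minorant touching it at
any prescribed point (a subgradient, from Hahn–Banach applied to the strict epigraph). Writing
such a minorant as `⟪a, x⟫ + ⟪v, y⟫ + c`, radial symmetry in `y` lets one rotate `y` onto the
direction of `v`, so `⟪a, x⟫ + ‖v‖ ‖y‖ + c` is still a minorant, and by Cauchy–Schwarz it still
touches at the chosen point. Taking these minorants at the points of a dense sequence, their
supremum is convex, hence continuous, and agrees with `f` on a dense set, so it is `f`; as
`f ≥ 0`, the positive parts of the minorants are minorants too.
-/

open Set
open scoped RealInnerProductSpace

section Subgradient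

variable {E : Type*} [NormedAddCommGroup E] [NormedSpace ℝ E]

lemma ContinuousLinearMap.apply_prod_eq_add_mul (Φ : E × ℝ →L[ℝ] ℝ) (x : E) (t : ℝ) :
    Φ (x, t) = Φ (x, 0) + t * Φ (0, 1) := by
  have h0t : ((0 : E), t) = t • ((0 : E), (1 : ℝ)) := by simp
  rw [← Φ.comp_inl_add_comp_inr (x, t)]
  simp only [ContinuousLinearMap.comp_apply, ContinuousLinearMap.inl_apply,
    ContinuousLinearMap.inr_apply]
  rw [h0t, map_smul, smul_eq_mul]

lemma ConvexOn.exists_subgradient [FiniteDimensional ℝ E] {f : E → ℝ}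
    (hf : ConvexOn ℝ univ f) (p : E) :
    ∃ L : E →L[ℝ] ℝ, ∀ ξ, f p + L (ξ - p) ≤ f ξ := by
  have hcont : Continuous f := continuousOn_univ.mp (hf.continuousOn isOpen_univ)
  have hconv : Convex ℝ {q : E × ℝ | f q.1 < q.2} := by simpa using hf.convex_strict_epigraph
  obtain ⟨Φ, hΦ⟩ := geometric_hahn_banach_point_open hconv
    (isOpen_lt (hcont.comp continuous_fst) continuous_snd) (x := (p, f p)) (lt_irrefl (f p))
  have hsep : ∀ ξ, Φ (p, f p) ≤ Φ (ξ, f ξ) := fun ξ =>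
    ge_of_tendsto (by fun_prop : Continuous fun t => Φ (ξ, t)).continuousWithinAt
      (eventually_nhdsWithin_of_forall (s := Ioi (f ξ)) fun t ht => (hΦ (ξ, t) ht).le)
  set lam := Φ (0, 1)
  have hlam : 0 < lam := by
    have := hΦ (p, f p + 1) (lt_add_one (f p))
    rw [Φ.apply_prod_eq_add_mul p (f p + 1), Φ.apply_prod_eq_add_mul p (f p)] at this
    linarith
  refine ⟨-lam⁻¹ • Φ.comp (ContinuousLinearMap.inl ℝ E ℝ), fun ξ => ?_⟩
  have hξ := hsep ξ
  rw [Φ.apply_prod_eq_add_mul p, Φ.apply_prod_eq_add_mul ξ] at hξ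
  have hsub : Φ (ξ - p, 0) = Φ (ξ, 0) - Φ (p, 0) := by
    rw [← map_sub, Prod.mk_sub_mk, sub_zero]
  simp only [FunLike.coe_smul, Pi.smul_apply, ContinuousLinearMap.comp_apply,
    ContinuousLinearMap.inl_apply, hsub, smul_eq_mul]
  rw [← sub_nonneg]
  have hdiff : f ξ - (f p + -lam⁻¹ * (Φ (ξ, 0) - Φ (p, 0))) =
      lam⁻¹ * (Φ (ξ, 0) + f ξ * lam - (Φ (p, 0) + f p * lam)) := by
    field_simp; ring
  rw [hdiff]
  exact mul_nonneg (inv_nonneg.mpr hlam.le) (sub_nonneg.mpr hξ)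

end Subgradient

lemma convexOn_ciSup {ι E : Type*} [Nonempty ι] [AddCommGroup E] [Module ℝ E] {s : Set E}
    {g : ι → E → ℝ} (hs : Convex ℝ s) (hg : ∀ i, ConvexOn ℝ s (g i))
    (hbdd : ∀ x ∈ s, BddAbove (range fun i => g i x)) :
    ConvexOn ℝ s fun x => ⨆ i, g i x := by
  refine ⟨hs, fun x hx y hy a b ha hb hab => ciSup_le fun i => ?_⟩
  calc g i (a • x + b • y) ≤ a • g i x + b • g i y := (hg i).2 hx hy ha hb hab
    _ ≤ a • (⨆ j, g j x) + b • ⨆ j, g j y :=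
      add_le_add (smul_le_smul_of_nonneg_left (le_ciSup (hbdd x hx) i) ha)
        (smul_le_smul_of_nonneg_left (le_ciSup (hbdd y hy) i) hb)

lemma eq_iSup_of_convexOn_le_of_le_on_dense {ι E : Type*} [Nonempty ι] [NormedAddCommGroup E]
    [NormedSpace ℝ E] [FiniteDimensional ℝ E] {f : E → ℝ} {g : ι → E → ℝ} {p : ι → E}
    (hf : Continuous f) (hg : ∀ i, ConvexOn ℝ univ (g i)) (hle : ∀ i x, g i x ≤ f x)
    (hp : DenseRange p) (hge : ∀ i, f (p i) ≤ g i (p i)) (x : E) :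
    f x = ⨆ i, g i x := by
  have hbdd : ∀ x, BddAbove (range fun i => g i x) := fun x =>
    ⟨f x, forall_mem_range.mpr fun i => hle i x⟩
  have hsup : Continuous fun x => ⨆ i, g i x := continuousOn_univ.mp <|
    (convexOn_ciSup convex_univ hg fun x _ => hbdd x).continuousOn isOpen_univ
  refine congrFun (hp.equalizer hf hsup (funext fun i => ?_)) x
  exact le_antisymm ((hge i).trans (le_ciSup (hbdd _) i)) (ciSup_le fun j => hle j (p i))

section Radial

variable {E F : Type*} [NormedAddCommGroup E] [InnerProductSpace ℝ E]
  [NormedAddCommGroup F] [InnerProductSpace ℝ F]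

def radialAffine (a : E) (b c : ℝ) (ξ : E × F) : ℝ := ⟪a, ξ.1⟫ + b * ‖ξ.2‖ + c

lemma convexOn_radialAffine (a : E) {b : ℝ} (hb : 0 ≤ b) (c : ℝ) :
    ConvexOn ℝ univ (radialAffine (F := F) a b c) := by
  have hinner : ConvexOn ℝ univ fun ξ : E × F => ⟪a, ξ.1⟫ :=
    ((innerₛₗ ℝ a).comp (LinearMap.fst ℝ E F)).convexOn convex_univ
  have hnorm : ConvexOn ℝ univ fun ξ : E × F => b * ‖ξ.2‖ :=
    (convexOn_univ_norm.comp_linearMap (LinearMap.snd ℝ E F)).smul hb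
  exact (hinner.add hnorm).add_const c

lemma exists_norm_eq_and_inner_eq_norm_mul_norm (v y : F) :
    ∃ y' : F, ‖y'‖ = ‖y‖ ∧ ⟪v, y'⟫ = ‖v‖ * ‖y‖ := by
  rcases eq_or_ne v 0 with rfl | hv
  · exact ⟨y, rfl, by simp⟩
  · have hv' : ‖v‖ ≠ 0 := norm_ne_zero_iff.mpr hv
    refine ⟨(‖y‖ / ‖v‖) • v, ?_, ?_⟩
    · rw [norm_smul, Real.norm_of_nonneg (by positivity), div_mul_cancel₀ _ hv']
    · rw [real_inner_smul_right, real_inner_self_eq_norm_mul_norm]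
      field_simp

lemma inner_add_inner_add_le_radialAffine (a : E) (v : F) (c : ℝ) (ξ : E × F) :
    ⟪a, ξ.1⟫ + ⟪v, ξ.2⟫ + c ≤ radialAffine a ‖v‖ c ξ := by
  unfold radialAffine
  gcongr
  exact real_inner_le_norm v ξ.2

lemma radialAffine_le_of_inner_add_inner_add_le {f : E × F → ℝ}
    (hf : ∀ x y y', ‖y‖ = ‖y'‖ → f (x, y) = f (x, y')) {a : E} {v : F} {c : ℝ}
    (h : ∀ ξ, ⟪a, ξ.1⟫ + ⟪v, ξ.2⟫ + c ≤ f ξ) (ξ : E × F) :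
    radialAffine a ‖v‖ c ξ ≤ f ξ := by
  obtain ⟨x, y⟩ := ξ
  obtain ⟨y', hy', hvy'⟩ := exists_norm_eq_and_inner_eq_norm_mul_norm v y
  calc radialAffine a ‖v‖ c (x, y) = ⟪a, x⟫ + ⟪v, y'⟫ + c := by rw [hvy']; rfl
    _ ≤ f (x, y') := h (x, y')
    _ = f (x, y) := hf x y' y hy'

lemma ContinuousLinearMap.exists_apply_prod_eq_inner_add_inner [CompleteSpace E]
    [CompleteSpace F] (L : E × F →L[ℝ] ℝ) :
    ∃ (a : E) (v : F), ∀ ξ, L ξ = ⟪a, ξ.1⟫ + ⟪v, ξ.2⟫ := by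
  refine ⟨(InnerProductSpace.toDual ℝ E).symm (L.comp (.inl ℝ E F)),
    (InnerProductSpace.toDual ℝ F).symm (L.comp (.inr ℝ E F)), fun ξ => ?_⟩
  simp only [InnerProductSpace.toDual_symm_apply, L.comp_inl_add_comp_inr]

lemma ConvexOn.exists_radialAffine_le_eq [FiniteDimensional ℝ E] [FiniteDimensional ℝ F]
    {f : E × F → ℝ} (hf : ConvexOn ℝ univ f)
    (hrad : ∀ x y y', ‖y‖ = ‖y'‖ → f (x, y) = f (x, y')) (p : E × F) :
    ∃ (a : E) (b c : ℝ), 0 ≤ b ∧ (∀ ξ, radialAffine a b c ξ ≤ f ξ) ∧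
      radialAffine a b c p = f p := by
  obtain ⟨L, hL⟩ := hf.exists_subgradient p
  obtain ⟨a, v, hLav⟩ := L.exists_apply_prod_eq_inner_add_inner
  have hminor : ∀ ξ, ⟪a, ξ.1⟫ + ⟪v, ξ.2⟫ + (f p - L p) ≤ f ξ := fun ξ => by
    have := hL ξ
    rw [map_sub, hLav ξ] at this
    linarith
  refine ⟨a, ‖v‖, f p - L p, norm_nonneg v,
    radialAffine_le_of_inner_add_inner_add_le hrad hminor,
    le_antisymm (radialAffine_le_of_inner_add_inner_add_le hrad hminor p) ?_⟩
  calc f p = ⟪a, p.1⟫ + ⟪v, p.2⟫ + (f p - L p) := by rw [← hLav]; ring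
    _ ≤ radialAffine a ‖v‖ (f p - L p) p := inner_add_inner_add_le_radialAffine a v _ p

end Radial

theorem convex_radial_eq_iSup_posPart_radialAffine_general {m k : ℕ}
    (f : EuclideanSpace ℝ (Fin m) × EuclideanSpace ℝ (Fin k) → ℝ)
    (hf0 : ∀ ξ, 0 ≤ f ξ) (hconv : ConvexOn ℝ Set.univ f)
    (hradial : ∃ ft : EuclideanSpace ℝ (Fin m) × ℝ → ℝ,
      ∀ x y, f (x, y) = ft (x, ‖y‖)) :
    ∃ (a : ℕ → EuclideanSpace ℝ (Fin m)) (b c : ℕ → ℝ),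
      (∀ ξ : EuclideanSpace ℝ (Fin m) × EuclideanSpace ℝ (Fin k),
        f ξ = ⨆ j : ℕ, max (⟪a j, ξ.1⟫ + b j * ‖ξ.2‖ + c j) 0) ∧
      (∀ j : ℕ, ConvexOn ℝ Set.univ
        (fun ξ : EuclideanSpace ℝ (Fin m) × EuclideanSpace ℝ (Fin k) =>
          max (⟪a j, ξ.1⟫ + b j * ‖ξ.2‖ + c j) 0)) := by
  obtain ⟨ft, hft⟩ := hradial
  have hrad : ∀ x y y', ‖y‖ = ‖y'‖ → f (x, y) = f (x, y') := fun x y y' h => by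
    rw [hft, hft, h]
  choose a b c hb hle heq using fun j =>
    hconv.exists_radialAffine_le_eq hrad (TopologicalSpace.denseSeq _ j)
  have hconvj : ∀ j, ConvexOn ℝ univ
      fun ξ : EuclideanSpace ℝ (Fin m) × EuclideanSpace ℝ (Fin k) =>
      max (radialAffine (a j) (b j) (c j) ξ) 0 :=
    fun j => (convexOn_radialAffine (a j) (hb j) (c j)).sup (convexOn_const 0 convex_univ)
  refine ⟨a, b, c, eq_iSup_of_convexOn_le_of_le_on_dense
    (continuousOn_univ.mp (hconv.continuousOn isOpen_univ)) hconvj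
    (fun j ξ => max_le (hle j ξ) (hf0 ξ)) (TopologicalSpace.denseRange_denseSeq _)
    (fun j => (heq j).symm.le.trans (le_max_left _ _)), hconvj⟩

/-- A non-negative convex function on `ℝⁿ = ℝ^{n-k}_x × ℝ^k_y` vanishing at `0` and radially
symmetric in the last `k` variables is the countable supremum of positive parts of
"radial affine" functions `ξ ↦ (a·ξ_x + b|ξ_y| + c)⁺`, each of which is convex. -/
theorem convex_radial_eq_iSup_posPart_radialAffine {m k : ℕ}
    (f : EuclideanSpace ℝ (Fin m) × EuclideanSpace ℝ (Fin k) → ℝ)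
    (hf0 : ∀ ξ, 0 ≤ f ξ) (hconv : ConvexOn ℝ Set.univ f) (hzero : f 0 = 0)
    (hradial : ∃ ft : EuclideanSpace ℝ (Fin m) × ℝ → ℝ,
      ∀ x y, f (x, y) = ft (x, ‖y‖)) :
    ∃ (a : ℕ → EuclideanSpace ℝ (Fin m)) (b c : ℕ → ℝ),
      (∀ ξ : EuclideanSpace ℝ (Fin m) × EuclideanSpace ℝ (Fin k),
        f ξ = ⨆ j : ℕ, max (⟪a j, ξ.1⟫ + b j * ‖ξ.2‖ + c j) 0) ∧
      (∀ j : ℕ, ConvexOn ℝ Set.univ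
        (fun ξ : EuclideanSpace ℝ (Fin m) × EuclideanSpace ℝ (Fin k) =>
          max (⟪a j, ξ.1⟫ + b j * ‖ξ.2‖ + c j) 0)) :=
  convex_radial_eq_iSup_posPart_radialAffine_general f hf0 hconv hradial
end

section
/- Let $\beta \in L^0(U;\mathbb{R}^k)$ be a measurable function, finite a.e., on a connected open set $U \subset \mathbb{R}^{m}$, such that for each coordinate direction $e_i$ and a.e. line $R$ parallel to $e_i$, the restriction of each truncation $\beta^T$ (defined componentwise by truncating at level $T$) to $U \cap R$ is locally absolutely continuous with derivative zero a.e. on the set where $|\beta_j| \le T$. Then $\beta$ is a.e. equal to a constant on $U$. -/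
/-!
Along almost every line parallel to a coordinate axis, each truncation `truncAt T ∘ β_j` is a
primitive of a density vanishing where `|β_j| < T`. Such a continuous function cannot cross any
level strictly between `-T` and `T` (on a crossing interval the density integrates to zero), so it
is constant on segments inside `U`, and letting `T → ∞`, so is `β`. Exchanging the coordinates of
`x` for those of `y` one at a time then gives `β y = β x` for almost every pair of points of a box
in `U`, because every partially exchanged point is again generic. Hence `β` is a.e. constant near
each point, and the connectedness of `U` makes these constants agree.
-/

open MeasureTheory

/-- Truncation of a real number at level `T`. -/
noncomputable def truncAt (T r : ℝ) : ℝ := max (min r T) (-T)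

open Set Filter Topology

def IsPrimitiveOn (g h : ℝ → ℝ) (S : Set ℝ) : Prop :=
  ∀ a b : ℝ, uIcc a b ⊆ S → IntervalIntegrable h volume a b ∧ g b - g a = ∫ s in a..b, h s

theorem ContinuousOn.exists_Ioo_mapsTo_Ioo {α β : Type*} [ConditionallyCompleteLinearOrder α]
    [TopologicalSpace α] [OrderTopology α] [LinearOrder β] [TopologicalSpace β]
    [OrderClosedTopology β] {g : α → β} {a b : α} {c c' : β} (hg : ContinuousOn g (Icc a b))
    (hab : a ≤ b) (ha : g a ≤ c) (hb : c' ≤ g b) :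
    ∃ t₁ t₂, a ≤ t₁ ∧ t₁ ≤ t₂ ∧ t₂ ≤ b ∧ g t₁ ≤ c ∧ c' ≤ g t₂ ∧
      MapsTo g (Ioo t₁ t₂) (Ioo c c') := by
  set K := Icc a b ∩ g ⁻¹' Ici c'
  have hK : IsClosed K := hg.preimage_isClosed_of_isClosed isClosed_Icc isClosed_Ici
  have ht₂ : sInf K ∈ K := hK.csInf_mem ⟨b, ⟨hab, le_rfl⟩, hb⟩ ⟨a, fun t ht => ht.1.1⟩
  set K' := Icc a (sInf K) ∩ g ⁻¹' Iic c
  have hK' : IsClosed K' :=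
    (hg.mono (Icc_subset_Icc_right ht₂.1.2)).preimage_isClosed_of_isClosed isClosed_Icc isClosed_Iic
  have ht₁ : sSup K' ∈ K' := hK'.csSup_mem ⟨a, ⟨le_rfl, ht₂.1.1⟩, ha⟩ ⟨sInf K, fun t ht => ht.1.2⟩
  refine ⟨sSup K', sInf K, ht₁.1.1, ht₁.1.2, ht₂.1.2, ht₁.2, ht₂.2, fun t ht => ⟨?_, ?_⟩⟩
  · by_contra! hle
    exact ht.1.not_ge (le_csSup ⟨sInf K, fun t ht => ht.1.2⟩
      ⟨⟨ht₁.1.1.trans ht.1.le, ht.2.le⟩, hle⟩)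
  · by_contra! hle
    exact ht.2.not_ge (csInf_le ⟨a, fun t ht => ht.1.1⟩
      ⟨⟨ht₁.1.1.trans ht.1.le, ht.2.le.trans ht₂.1.2⟩, hle⟩)

namespace IsPrimitiveOn

variable {g h : ℝ → ℝ} {S : Set ℝ}

theorem neg (hg : IsPrimitiveOn g h S) : IsPrimitiveOn (-g) (-h) S := fun a b hab =>
  ⟨(hg a b hab).1.neg, by simp [intervalIntegral.integral_neg, ← (hg a b hab).2]; ring⟩

theorem continuousOn (hg : IsPrimitiveOn g h S) {a b : ℝ} (hab : uIcc a b ⊆ S) :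
    ContinuousOn g (uIcc a b) := by
  refine ((continuousOn_const (c := g a)).add (intervalIntegral.continuousOn_primitive_interval'
    (hg a b hab).1 left_mem_uIcc)).congr fun t ht => ?_
  have := (hg a t ((uIcc_subset_uIcc left_mem_uIcc ht).trans hab)).2
  simp only [Pi.add_apply]
  linarith

theorem le_of_abs_le {T : ℝ} (hg : IsPrimitiveOn g h S) (hgT : ∀ s ∈ S, |g s| ≤ T)
    (hzero : ∀ᵐ s, s ∈ S → |g s| < T → h s = 0) {a b : ℝ} (hab : a ≤ b) (hS : Icc a b ⊆ S) :
    g b ≤ g a := by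
  by_contra! hlt
  obtain ⟨c, hac, hcb⟩ := exists_between hlt
  obtain ⟨c', hcc', hc'b⟩ := exists_between hcb
  have hseg : uIcc a b ⊆ S := uIcc_of_le hab ▸ hS
  obtain ⟨t₁, t₂, hat₁, ht₁₂, ht₂b, hgt₁, hgt₂, hmaps⟩ :=
    (uIcc_of_le hab ▸ hg.continuousOn hseg).exists_Ioo_mapsTo_Ioo hab hac.le hc'b.le
  have hsub : Ioo t₁ t₂ ⊆ S := Ioo_subset_Icc_self.trans ((Icc_subset_Icc hat₁ ht₂b).trans hS)
  have hintegral : ∫ s in t₁..t₂, h s = 0 := by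
    rw [intervalIntegral.integral_of_le ht₁₂, integral_Ioc_eq_integral_Ioo]
    refine setIntegral_eq_zero_of_ae_eq_zero (hzero.mono fun s hs hst => hs (hsub hst) ?_)
    have hga := (abs_le.1 (hgT a (hS ⟨le_rfl, hab⟩))).1
    have hgb := (abs_le.1 (hgT b (hS ⟨hab, le_rfl⟩))).2
    exact abs_lt.2 ⟨by linarith [(hmaps hst).1], by linarith [(hmaps hst).2]⟩
  have hFTC := (hg t₁ t₂ (uIcc_of_le ht₁₂ ▸ (Icc_subset_Icc hat₁ ht₂b).trans hS)).2
  linarith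

theorem eq_of_abs_le {T : ℝ} (hg : IsPrimitiveOn g h S) (hgT : ∀ s ∈ S, |g s| ≤ T)
    (hzero : ∀ᵐ s, s ∈ S → |g s| < T → h s = 0) {a b : ℝ} (hab : uIcc a b ⊆ S) : g b = g a := by
  wlog hle : a ≤ b generalizing a b
  · exact (this (uIcc_comm a b ▸ hab) (le_of_not_ge hle)).symm
  have hS : Icc a b ⊆ S := uIcc_of_le hle ▸ hab
  refine le_antisymm (hg.le_of_abs_le hgT hzero hle hS) ?_
  have := hg.neg.le_of_abs_le (T := T) (by simpa using hgT) (by simpa using hzero) hle hS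
  simpa using this

end IsPrimitiveOn

section Truncation

variable {T r : ℝ}

theorem abs_truncAt_le (hT : 0 ≤ T) (r : ℝ) : |truncAt T r| ≤ T :=
  abs_le.2 ⟨le_max_right _ _, max_le (min_le_right _ _) (by linarith)⟩

theorem truncAt_of_abs_le (h : |r| ≤ T) : truncAt T r = r := by
  rw [truncAt, min_eq_left (abs_le.1 h).2, max_eq_left (abs_le.1 h).1]

theorem abs_lt_of_abs_truncAt_lt (h : |truncAt T r| < T) : |r| < T := by
  unfold truncAt at h
  rw [abs_lt] at h ⊢
  constructor
  · by_contra! hr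
    rw [min_eq_left (by linarith), max_eq_right hr] at h
    linarith [h.1]
  · by_contra! hr
    rw [min_eq_right hr, max_eq_left (by linarith)] at h
    linarith [h.2]

theorem eq_of_forall_truncAt_eq {u v : ℝ} (h : ∀ n : ℕ, truncAt (n + 1) u = truncAt (n + 1) v) :
    u = v := by
  obtain ⟨n, hn⟩ := exists_nat_ge (max |u| |v|)
  have hu : |u| ≤ n + 1 := by linarith [le_max_left |u| |v|]
  have hv : |v| ≤ n + 1 := by linarith [le_max_right |u| |v|]
  simpa only [truncAt_of_abs_le hu, truncAt_of_abs_le hv] using h n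

theorem truncAt_eq_of_isPrimitiveOn {γ h : ℝ → ℝ} {S : Set ℝ} (hT : 0 < T)
    (hzero : ∀ᵐ s, s ∈ S ∧ |γ s| ≤ T → h s = 0)
    (hγ : IsPrimitiveOn (fun s => truncAt T (γ s)) h S) {a b : ℝ} (hab : uIcc a b ⊆ S) :
    truncAt T (γ b) = truncAt T (γ a) :=
  hγ.eq_of_abs_le (fun _ _ => abs_truncAt_le hT.le _)
    (hzero.mono fun _ hs hsS hlt => hs ⟨hsS, (abs_lt_of_abs_truncAt_lt hlt).le⟩) hab

end Truncation

section Lines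

variable {ι κ : Type*} [Fintype ι] [DecidableEq ι]

theorem ae_forall_segment_eq {U : Set (EuclideanSpace ℝ ι)}
    {β : EuclideanSpace ℝ ι → EuclideanSpace ℝ κ} {i : ι}
    (hline : ∀ T : ℝ, 0 < T → ∀ᵐ x ∂volume, ∀ j : κ, ∃ h : ℝ → ℝ,
      (∀ᵐ s ∂volume, (x + s • EuclideanSpace.single i 1 ∈ U ∧
        |β (x + s • EuclideanSpace.single i 1) j| ≤ T) → h s = 0) ∧
      IsPrimitiveOn (fun s => truncAt T (β (x + s • EuclideanSpace.single i 1) j)) h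
        {s | x + s • EuclideanSpace.single i 1 ∈ U}) :
    ∀ᵐ x ∂volume, ∀ a b : ℝ, uIcc a b ⊆ {s | x + s • EuclideanSpace.single i 1 ∈ U} →
      β (x + b • EuclideanSpace.single i 1) = β (x + a • EuclideanSpace.single i 1) := by
  filter_upwards [ae_all_iff.2 fun n : ℕ => hline (n + 1) n.cast_add_one_pos] with x hx a b hab
  ext j
  refine eq_of_forall_truncAt_eq fun n => ?_
  obtain ⟨h, hzero, hprim⟩ := hx n j
  exact truncAt_eq_of_isPrimitiveOn n.cast_add_one_pos hzero hprim hab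

end Lines

section Mixing

variable {ι : Type*} [DecidableEq ι]

noncomputable def mix (s : Finset ι) (x y : EuclideanSpace ℝ ι) : EuclideanSpace ℝ ι :=
  WithLp.toLp 2 (s.piecewise (WithLp.ofLp y) (WithLp.ofLp x))

variable {s : Finset ι} {x y : EuclideanSpace ℝ ι}

theorem mix_apply (j : ι) : mix s x y j = if j ∈ s then y j else x j := by
  simp [mix, Finset.piecewise]

theorem mix_empty : mix ∅ x y = x := by
  ext j; simp [mix_apply]

theorem mix_insert {i : ι} (hi : i ∉ s) :
    mix (insert i s) x y = mix s x y + (y i - x i) • EuclideanSpace.single i 1 := by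
  ext j
  by_cases hj : j = i
  · subst hj; simp [mix_apply, hi]
  · simp [mix_apply, hj]

variable [Fintype ι]

theorem mix_univ : mix Finset.univ x y = y := by
  ext j; simp [mix_apply]

theorem measurePreserving_mix_swap (s : Finset ι) :
    MeasurePreserving
      (fun p : EuclideanSpace ℝ ι × EuclideanSpace ℝ ι => (mix s p.1 p.2, mix s p.2 p.1))
      (volume.prod volume) (volume.prod volume) := by
  have hswap : ∀ j, MeasurePreserving (if j ∈ s then Prod.swap else id)
      (volume : Measure (ℝ × ℝ)) volume := fun j => by
    split_ifs
    · exact Measure.measurePreserving_swap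
    · exact MeasurePreserving.id _
  have hofLp := PiLp.volume_preserving_ofLp ι
  have htoLp := PiLp.volume_preserving_toLp ι
  have hprod := measurePreserving_arrowProdEquivProdArrow ℝ ℝ ι (fun _ => volume) fun _ => volume
  -- pair up the coordinates of `x` and `y`, swap the pairs indexed by `s`, and unpair
  have := ((htoLp.prod htoLp).comp hprod).comp
    ((measurePreserving_pi _ _ hswap).comp ((hprod.symm _).comp (hofLp.prod hofLp)))
  convert this using 1
  ext p j <;> by_cases hj : j ∈ s <;> simp [mix_apply, hj, MeasurableEquiv.arrowProdEquivProdArrow]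

theorem quasiMeasurePreserving_mix (s : Finset ι) :
    Measure.QuasiMeasurePreserving
      (fun p : EuclideanSpace ℝ ι × EuclideanSpace ℝ ι => mix s p.1 p.2)
      (volume.prod volume) volume :=
  Measure.quasiMeasurePreserving_fst.comp (measurePreserving_mix_swap s).quasiMeasurePreserving

end Mixing

section Box

variable {ι : Type*} [DecidableEq ι]

theorem add_smul_single_mem_box {I : ι → Set ℝ} (hI : ∀ j, (I j).OrdConnected)
    {x : EuclideanSpace ℝ ι} (hx : ∀ j, x j ∈ I j) {i : ι} {t : ℝ} (ht : x i + t ∈ I i)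
    {s : ℝ} (hs : s ∈ uIcc 0 t) (j : ι) : (x + s • EuclideanSpace.single i (1 : ℝ)) j ∈ I j := by
  by_cases hj : j = i
  · subst hj
    have hs' : x j + s ∈ uIcc (x j) (x j + t) := by
      have := mem_image_of_mem (x j + ·) hs
      rwa [image_const_add_uIcc, add_zero] at this
    simpa using (hI j).uIcc_subset (hx j) ht hs'
  · simpa [hj] using hx j

variable [Fintype ι]

theorem ae_prod_eq_of_ae_coordinate_invariant {Y : Type*} {I : ι → Set ℝ}
    {β : EuclideanSpace ℝ ι → Y}
    (hβ : ∀ i, ∀ᵐ x ∂volume, (∀ j, x j ∈ I j) → ∀ t : ℝ, x i + t ∈ I i →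
      β (x + t • EuclideanSpace.single i 1) = β x) :
    ∀ᵐ p : EuclideanSpace ℝ ι × EuclideanSpace ℝ ι ∂volume.prod volume,
      (∀ j, p.1 j ∈ I j) → (∀ j, p.2 j ∈ I j) → β p.2 = β p.1 := by
  suffices ∀ s : Finset ι, ∀ᵐ p : EuclideanSpace ℝ ι × EuclideanSpace ℝ ι ∂volume.prod volume,
      (∀ j, p.1 j ∈ I j) → (∀ j, p.2 j ∈ I j) → β (mix s p.1 p.2) = β p.1 by
    simpa only [mix_univ] using this Finset.univ
  intro s
  induction s using Finset.induction_on with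
  | empty => exact Eventually.of_forall fun p _ _ => by rw [mix_empty]
  | insert i s hi ih =>
    filter_upwards [ih, (quasiMeasurePreserving_mix s).ae (hβ i)] with p hp hgood hx hy
    have hmix : ∀ j, mix s p.1 p.2 j ∈ I j := fun j => by
      rw [mix_apply]; split_ifs; exacts [hy j, hx j]
    rw [mix_insert hi, hgood hmix _ (by simpa [mix_apply, hi] using hy i), hp hx hy]

end Box

theorem exists_ae_eq_const_of_ae_prod_eq {α Y : Type*} [MeasurableSpace α]
    {μ : Measure α} [SFinite μ] [Nonempty Y] {B : Set α} {f : α → Y}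
    (h : ∀ᵐ p ∂μ.prod μ, p.1 ∈ B → p.2 ∈ B → f p.2 = f p.1) :
    ∃ C, ∀ᵐ y ∂μ, y ∈ B → f y = C := by
  by_cases hB : μ B = 0
  · exact ⟨Classical.arbitrary Y, measure_mono_null (fun y hy => (Classical.not_imp.1 hy).1) hB⟩
  obtain ⟨x₀, hx₀B, hx₀⟩ :=
    ((frequently_ae_mem_iff.2 hB).and_eventually (Measure.ae_ae_of_ae_prod h)).exists
  exact ⟨f x₀, hx₀.mono fun y hy hyB => hy hx₀B hyB⟩

theorem EuclideanSpace.exists_box_mem_nhds_subset {ι : Type*} [Fintype ι]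
    {U : Set (EuclideanSpace ℝ ι)} (hU : IsOpen U) {x : EuclideanSpace ℝ ι} (hx : x ∈ U) :
    ∃ I : ι → Set ℝ, (∀ j, (I j).OrdConnected) ∧
      {y : EuclideanSpace ℝ ι | ∀ j, y j ∈ I j} ∈ 𝓝 x ∧
      {y : EuclideanSpace ℝ ι | ∀ j, y j ∈ I j} ⊆ U := by
  have hU' : WithLp.toLp 2 ⁻¹' U ∈ 𝓝 (WithLp.ofLp x) :=
    (PiLp.continuous_toLp 2 _).continuousAt.preimage_mem_nhds (hU.mem_nhds hx)
  obtain ⟨ε, hε, hball⟩ := Metric.mem_nhds_iff.1 hU'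
  have hbox : {y : EuclideanSpace ℝ ι | ∀ j, y j ∈ Ioo (x j - ε) (x j + ε)} =
      WithLp.ofLp ⁻¹' Metric.ball (WithLp.ofLp x) ε := by
    ext y; simp [ball_pi _ hε, Real.ball_eq_Ioo]
  refine ⟨fun j => Ioo (x j - ε) (x j + ε), fun _ => ordConnected_Ioo, ?_, ?_⟩
  · exact hbox ▸ (PiLp.continuous_ofLp 2 _).continuousAt.preimage_mem_nhds
      (Metric.ball_mem_nhds _ hε)
  · rw [hbox]
    exact fun y hy => hball hy

section LocalToGlobal

variable {X Y : Type*} [TopologicalSpace X] [MeasurableSpace X] {μ : Measure X}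
  [μ.IsOpenPosMeasure] {f : X → Y}

theorem eq_of_ae_eq_const_of_mem_nhds {V : Set X} {x : X} (hV : V ∈ 𝓝 x) {C C' : Y}
    (hC : ∀ᵐ y ∂μ, y ∈ V → f y = C) (hC' : ∀ᵐ y ∂μ, y ∈ V → f y = C') : C = C' := by
  obtain ⟨y, hyV, hy⟩ :=
    ((frequently_ae_mem_iff.2 (μ.measure_pos_of_mem_nhds hV).ne').and_eventually
      (hC.and hC')).exists
  exact (hy.1 hyV).symm.trans (hy.2 hyV)

theorem IsConnected.exists_ae_eq_const_of_forall_nhds [SecondCountableTopology X] {U : Set X}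
    (hU : IsConnected U) (hloc : ∀ x ∈ U, ∃ V ∈ 𝓝 x, ∃ C, ∀ᵐ y ∂μ, y ∈ V → f y = C) :
    ∃ C, ∀ᵐ y ∂μ, y ∈ U → f y = C := by
  obtain ⟨x₀, hx₀⟩ := hU.nonempty
  have : Nonempty Y := ⟨f x₀⟩
  choose! V hV C hC using hloc
  have hlocal : ∀ x ∈ U, ∀ᶠ y in 𝓝[U] x, C x = C y ∧ C y = C x := fun x hx => by
    filter_upwards [self_mem_nhdsWithin,
      nhdsWithin_le_nhds (eventually_mem_nhds_iff.2 (hV x hx))] with y hyU hVy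
    have := eq_of_ae_eq_const_of_mem_nhds (inter_mem hVy (hV y hyU))
      ((hC x hx).mono fun z hz hzV => hz hzV.1) ((hC y hyU).mono fun z hz hzV => hz hzV.2)
    exact ⟨this, this.symm⟩
  have hconst : ∀ x ∈ U, C x = C x₀ := fun x hx =>
    hU.isPreconnected.induction₂' (fun x y => C x = C y) hlocal (fun _ _ _ _ _ _ => Eq.trans) hx hx₀
  refine ⟨C x₀, ae_iff.2 (measure_null_of_locally_null _ fun x hx => ?_)⟩
  obtain ⟨hxU, -⟩ := Classical.not_imp.1 hx
  refine ⟨_, inter_mem_nhdsWithin _ (hV x hxU), measure_mono_null ?_ (ae_iff.1 (hC x hxU))⟩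
  rintro y ⟨hy, hyV⟩ hfy
  exact hy fun _ => (hfy hyV).trans (hconst x hxU)

end LocalToGlobal

theorem truncation_constancy_general {m k : ℕ}
    (U : Set (EuclideanSpace ℝ (Fin m))) (hUopen : IsOpen U) (hUconn : IsConnected U)
    (β : EuclideanSpace ℝ (Fin m) → EuclideanSpace ℝ (Fin k))
    (hline : ∀ i : Fin m, ∀ T : ℝ, 0 < T →
      ∀ᵐ x ∂(volume : Measure (EuclideanSpace ℝ (Fin m))), ∀ j : Fin k,
        ∃ h : ℝ → ℝ,
          (∀ᵐ s ∂(volume : Measure ℝ),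
            (x + s • EuclideanSpace.single i (1 : ℝ) ∈ U ∧
              |β (x + s • EuclideanSpace.single i (1 : ℝ)) j| ≤ T) → h s = 0) ∧
          (∀ a b : ℝ,
            Set.uIcc a b ⊆ {s : ℝ | x + s • EuclideanSpace.single i (1 : ℝ) ∈ U} →
            IntervalIntegrable h volume a b ∧
              truncAt T (β (x + b • EuclideanSpace.single i (1 : ℝ)) j) -
                truncAt T (β (x + a • EuclideanSpace.single i (1 : ℝ)) j) =
              ∫ s in a..b, h s)) :
    ∃ C : EuclideanSpace ℝ (Fin k),
      ∀ᵐ x ∂(volume : Measure (EuclideanSpace ℝ (Fin m))), x ∈ U → β x = C := by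
  refine hUconn.exists_ae_eq_const_of_forall_nhds fun x hx => ?_
  obtain ⟨I, hI, hxI, hIU⟩ := EuclideanSpace.exists_box_mem_nhds_subset hUopen hx
  refine ⟨_, hxI, exists_ae_eq_const_of_ae_prod_eq
    (ae_prod_eq_of_ae_coordinate_invariant fun i => ?_)⟩
  filter_upwards [ae_forall_segment_eq (hline i)] with y hy hyI t ht
  have hseg : uIcc 0 t ⊆ {s | y + s • EuclideanSpace.single i 1 ∈ U} := fun s hs =>
    hIU (add_smul_single_mem_box hI hyI ht hs)
  simpa using hy 0 t hseg

/-- The truncation argument: if `β : U → ℝ^k` is measurable on a connected open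
`U ⊆ ℝ^m` and, for each coordinate direction and a.e. line parallel to it, every
componentwise truncation `β^T` is locally absolutely continuous along the line with
derivative vanishing a.e. on the set where `|β_j| ≤ T`, then `β` is a.e. constant on `U`.
(Local absolute continuity with a.e. derivative `h` is expressed by the fundamental
theorem of calculus on segments contained in the domain.) -/
theorem truncation_constancy {m k : ℕ}
    (U : Set (EuclideanSpace ℝ (Fin m))) (hUopen : IsOpen U) (hUconn : IsConnected U)
    (β : EuclideanSpace ℝ (Fin m) → EuclideanSpace ℝ (Fin k)) (hβ : Measurable β)
    (hline : ∀ i : Fin m, ∀ T : ℝ, 0 < T →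
      ∀ᵐ x ∂(volume : Measure (EuclideanSpace ℝ (Fin m))), ∀ j : Fin k,
        ∃ h : ℝ → ℝ,
          (∀ᵐ s ∂(volume : Measure ℝ),
            (x + s • EuclideanSpace.single i (1 : ℝ) ∈ U ∧
              |β (x + s • EuclideanSpace.single i (1 : ℝ)) j| ≤ T) → h s = 0) ∧
          (∀ a b : ℝ,
            Set.uIcc a b ⊆ {s : ℝ | x + s • EuclideanSpace.single i (1 : ℝ) ∈ U} →
            IntervalIntegrable h volume a b ∧
              truncAt T (β (x + b • EuclideanSpace.single i (1 : ℝ)) j) -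
                truncAt T (β (x + a • EuclideanSpace.single i (1 : ℝ)) j) =
              ∫ s in a..b, h s)) :
    ∃ C : EuclideanSpace ℝ (Fin k),
      ∀ᵐ x ∂(volume : Measure (EuclideanSpace ℝ (Fin m))), x ∈ U → β x = C :=
  truncation_constancy_general U hUopen hUconn β hline
end
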